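/- Let G be the group with presentation ⟨s₁,s₂,s₃,h | [sₖ,h] for 1≤k≤3, s₁²h, s₂³h, s₃⁶h, s₁s₂s₃h⟩. Then there is exactly one surjective homomorphism φ : G → ℤ/2; it satisfies φ(s₁)=1, φ(s₂)=0, φ(s₃)=1, φ(h)=0, and it factors through ℤ via ψ with ψ(s₁)=3, ψ(s₂)=2, ψ(s₃)=1, ψ(h)=-6. -/

import Mathlib

/-
In ℤ/2 the relators force h ↦ 0 (from s₁²h), then s₂ ↦ 0 (from s₂³h) and s₃ ↦ s₁ (from s₁s₂s₃h),
so a homomorphism G → ℤ/2 is determined by the image of s₁. It is trivial if s₁ ↦ 0, and otherwise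
it is the reduction mod 2 of the homomorphism ψ : G → ℤ with values (3, 2, 1, -6), which kills every
relator (e.g. 6 - 6 = 0 for s₁²h and 3 + 2 + 1 - 6 = 0 for s₁s₂s₃h).
-/

open FreeGroup

/-- Relators of π₁(M₅) = ⟨s₁,s₂,s₃,h | [sₖ,h] (1≤k≤3), s₁²h, s₂³h, s₃⁶h, s₁s₂s₃h⟩,
generators s₁=0, s₂=1, s₃=2, h=3. -/
def relsM5 : Set (FreeGroup (Fin 4)) :=
  { of 0 * of 3 * (of 0)⁻¹ * (of 3)⁻¹,
    of 1 * of 3 * (of 1)⁻¹ * (of 3)⁻¹,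
    of 2 * of 3 * (of 2)⁻¹ * (of 3)⁻¹,
    of 0 ^ 2 * of 3, of 1 ^ 3 * of 3, of 2 ^ 6 * of 3,
    of 0 * of 1 * of 2 * of 3 }

/-- Reduction mod 2, multiplicatively. -/
def mod2 : Multiplicative ℤ →* Multiplicative (ZMod 2) :=
  AddMonoidHom.toMultiplicative (Int.castAddHom (ZMod 2))

theorem MonoidHom.surjective_iff_ne_one_of_zmod_two {G : Type*} [Group G]
    (φ : G →* Multiplicative (ZMod 2)) : Function.Surjective φ ↔ φ ≠ 1 := by
  have two_values : ∀ y : Multiplicative (ZMod 2), y = 1 ∨ y = .ofAdd 1 := by decide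
  constructor
  · rintro hφ rfl
    obtain ⟨g, hg⟩ := hφ (.ofAdd 1)
    rw [MonoidHom.one_apply] at hg
    exact absurd hg (by decide)
  · intro hφ y
    obtain ⟨g, hg⟩ : ∃ g, φ g ≠ 1 := by simpa [DFunLike.ext_iff] using hφ
    rcases two_values y with rfl | rfl
    · exact ⟨1, map_one φ⟩
    · exact ⟨g, (two_values _).resolve_left hg⟩

def ψM5Gens : Fin 4 → Multiplicative ℤ :=
  ![.ofAdd 3, .ofAdd 2, .ofAdd 1, .ofAdd (-6)]

theorem lift_ψM5Gens_eq_one : ∀ r ∈ relsM5, FreeGroup.lift ψM5Gens r = 1 := by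
  rintro r (rfl | rfl | rfl | rfl | rfl | rfl | rfl) <;>
    simp [ψM5Gens, ← ofAdd_add, ← ofAdd_neg] <;> rfl

noncomputable def ψM5 : PresentedGroup relsM5 →* Multiplicative ℤ :=
  PresentedGroup.toGroup lift_ψM5Gens_eq_one

theorem ψM5_of (i : Fin 4) : ψM5 (PresentedGroup.of i) = ψM5Gens i :=
  PresentedGroup.toGroup.of _

theorem mod2_comp_ψM5_ne_one : mod2.comp ψM5 ≠ 1 := by
  intro h
  have := DFunLike.congr_fun h (PresentedGroup.of 0)
  rw [MonoidHom.comp_apply, ψM5_of] at this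
  exact absurd this (by decide)

theorem eq_one_or_eq_mod2_comp_ψM5 (φ : PresentedGroup relsM5 →* Multiplicative (ZMod 2)) :
    φ = 1 ∨ φ = mod2.comp ψM5 := by
  have kills {r} (hr : r ∈ relsM5) := congrArg φ (PresentedGroup.one_of_mem hr)
  have h₁ := kills (show of 0 ^ 2 * of 3 ∈ relsM5 by simp [relsM5])
  have h₂ := kills (show of 1 ^ 3 * of 3 ∈ relsM5 by simp [relsM5])
  have h₃ := kills (show of 0 * of 1 * of 2 * of 3 ∈ relsM5 by simp [relsM5])
  simp only [_root_.map_mul, map_pow, _root_.map_one] at h₁ h₂ h₃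
  have solutions : ∀ a b c d : Multiplicative (ZMod 2),
      a ^ 2 * d = 1 → b ^ 3 * d = 1 → a * b * c * d = 1 →
      (a = 1 ∧ b = 1 ∧ c = 1 ∧ d = 1) ∨ (a = .ofAdd 1 ∧ b = 1 ∧ c = .ofAdd 1 ∧ d = 1) := by
    decide
  rcases solutions (φ (.of 0)) (φ (.of 1)) (φ (.of 2)) (φ (.of 3)) h₁ h₂ h₃ with
    ⟨ha, hb, hc, hd⟩ | ⟨ha, hb, hc, hd⟩
  · refine .inl (PresentedGroup.ext fun i => ?_)
    fin_cases i <;> assumption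
  · refine .inr (PresentedGroup.ext fun i => ?_)
    fin_cases i <;> simp [ha, hb, hc, hd, ψM5_of, ψM5Gens] <;> rfl

theorem eq_mod2_comp_ψM5_of_surjective {φ : PresentedGroup relsM5 →* Multiplicative (ZMod 2)}
    (hφ : Function.Surjective φ) : φ = mod2.comp ψM5 :=
  (eq_one_or_eq_mod2_comp_ψM5 φ).resolve_left
    ((MonoidHom.surjective_iff_ne_one_of_zmod_two φ).mp hφ)

/-- There is exactly one epimorphism π₁(M₅) → ℤ/2; it has values (1,0,1,0) on
(s₁,s₂,s₃,h) and factors through ℤ via ψ with values (3,2,1,-6). -/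
theorem stmt9 :
    Nat.card {φ : PresentedGroup relsM5 →* Multiplicative (ZMod 2) //
        Function.Surjective φ} = 1 ∧
    ∀ φ : PresentedGroup relsM5 →* Multiplicative (ZMod 2), Function.Surjective φ →
      φ (PresentedGroup.of 0) = Multiplicative.ofAdd (1 : ZMod 2) ∧
      φ (PresentedGroup.of 1) = Multiplicative.ofAdd (0 : ZMod 2) ∧
      φ (PresentedGroup.of 2) = Multiplicative.ofAdd (1 : ZMod 2) ∧
      φ (PresentedGroup.of 3) = Multiplicative.ofAdd (0 : ZMod 2) ∧
      ∃ ψ : PresentedGroup relsM5 →* Multiplicative ℤ,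
        ψ (PresentedGroup.of 0) = Multiplicative.ofAdd (3 : ℤ) ∧
        ψ (PresentedGroup.of 1) = Multiplicative.ofAdd (2 : ℤ) ∧
        ψ (PresentedGroup.of 2) = Multiplicative.ofAdd (1 : ℤ) ∧
        ψ (PresentedGroup.of 3) = Multiplicative.ofAdd (-6 : ℤ) ∧
        φ = mod2.comp ψ := by
  have hsurj : Function.Surjective (mod2.comp ψM5) :=
    (MonoidHom.surjective_iff_ne_one_of_zmod_two _).mpr mod2_comp_ψM5_ne_one
  refine ⟨?_, fun φ hφ => ?_⟩
  · rw [Nat.card_eq_one_iff_exists]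
    exact ⟨⟨_, hsurj⟩, fun ⟨φ, hφ⟩ => Subtype.ext (eq_mod2_comp_ψM5_of_surjective hφ)⟩
  · obtain rfl := eq_mod2_comp_ψM5_of_surjective hφ
    simp only [MonoidHom.comp_apply, ψM5_of]
    exact ⟨by decide, by decide, by decide, by decide, ψM5, rfl, rfl, rfl, rfl, rfl⟩
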